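/- Let τ > 0 and let C_τ be the clipping operator at threshold τ. For Y ~ N(μ_t, 1) with |μ_t| > τ, define μ_{t+1} = μ_t − E[C_τ(Y)]. Then |μ_{t+1}| ≤ |μ_t| − (Φ(2τ) − 1/2)·τ. -/

import Mathlib

/-!
Writing `Y = Z + μ` with `Z` standard normal, `E[C_τ(Y)] = E[C_τ(Z + μ)]` is at most `τ` and
nondecreasing in `μ`, and it is odd in `μ` because `C_τ` is odd; so we may take `μ > τ`, where
`0 ≤ μ - E[C_τ(Y)]` and it suffices to bound `E[C_τ(Z + τ)]` from below. Now `C_τ(z + τ)` is `-τ`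
for `z ≤ -2τ`, `z + τ` on `[-2τ, 0]` and `τ` for `z > 0`, whence
`E[C_τ(Z + τ)] = (Φ(2τ) - 1/2) τ + ∫_{-2τ}^0 φ(z) (z + τ) dz`, and the last integral is
nonnegative since the density `φ` decreases in `|z|` and `z + τ` is odd about `-τ`.
-/

open MeasureTheory ProbabilityTheory Set
open scoped NNReal

/-- Clipping operator `C_τ(a) = a * min(1, τ/|a|)`. -/
noncomputable def clip (τ a : ℝ) : ℝ := a * min 1 (τ / |a|)

/-- Standard Gaussian CDF. -/
noncomputable def Phi (x : ℝ) : ℝ := ((gaussianReal 0 1) (Set.Iic x)).toReal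

section Clip

variable {τ : ℝ}

lemma clip_eq_max_min (hτ : 0 ≤ τ) (a : ℝ) : clip τ a = max (-τ) (min τ a) := by
  unfold clip
  rcases le_or_gt |a| τ with h | h
  · rcases eq_or_ne a 0 with rfl | ha
    · simp [hτ]
    obtain ⟨h₁, h₂⟩ := abs_le.1 h
    rw [min_eq_left ((one_le_div (abs_pos.2 ha)).2 h), mul_one, min_eq_right h₂,
      max_eq_right h₁]
  · rw [min_eq_right ((div_le_one (hτ.trans_lt h)).2 h.le)]
    rcases abs_cases a with ⟨ha, ha'⟩ | ⟨ha, ha'⟩ <;> rw [ha] at h ⊢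
    · rw [mul_div_cancel₀ _ (by linarith), min_eq_left h.le, max_eq_right (by linarith)]
    · rw [div_neg, mul_neg, mul_div_cancel₀ _ (by linarith), min_eq_right (by linarith),
        max_eq_left (by linarith)]

lemma continuous_clip (hτ : 0 ≤ τ) : Continuous (clip τ) := by
  simp_rw [funext (clip_eq_max_min hτ)]
  fun_prop

lemma monotone_clip (hτ : 0 ≤ τ) : Monotone (clip τ) := fun a b hab => by
  simp only [clip_eq_max_min hτ]
  gcongr

lemma abs_clip_le (hτ : 0 ≤ τ) (a : ℝ) : |clip τ a| ≤ τ := by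
  rw [clip_eq_max_min hτ, abs_le]
  exact ⟨le_max_left _ _, max_le (by linarith) (min_le_left _ _)⟩

lemma clip_neg (τ a : ℝ) : clip τ (-a) = -clip τ a := by
  simp [clip, neg_mul]

lemma clip_of_le_neg (hτ : 0 ≤ τ) {a : ℝ} (h : a ≤ -τ) : clip τ a = -τ := by
  rw [clip_eq_max_min hτ, min_eq_right (by linarith), max_eq_left h]

lemma clip_of_le (hτ : 0 ≤ τ) {a : ℝ} (h : τ ≤ a) : clip τ a = τ := by
  rw [clip_eq_max_min hτ, min_eq_left h, max_eq_right (by linarith)]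

lemma clip_of_mem_Icc {a : ℝ} (h : a ∈ Icc (-τ) τ) : clip τ a = a := by
  rw [clip_eq_max_min (by linarith [h.1, h.2]), min_eq_right h.2, max_eq_right h.1]

end Clip

section StandardGaussian

lemma gaussianPDFReal_zero_neg (v : ℝ≥0) (x : ℝ) :
    gaussianPDFReal 0 v (-x) = gaussianPDFReal 0 v x := by
  simp [gaussianPDFReal]

lemma gaussianPDFReal_zero_le_of_sq_le (v : ℝ≥0) {x y : ℝ} (h : x ^ 2 ≤ y ^ 2) :
    gaussianPDFReal 0 v y ≤ gaussianPDFReal 0 v x := by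
  simp only [gaussianPDFReal, sub_zero]
  gcongr

lemma Phi_eq_integral (x : ℝ) : Phi x = ∫ z in Iic x, gaussianPDFReal 0 1 z := by
  rw [Phi, gaussianReal_apply_eq_integral 0 one_ne_zero,
    ENNReal.toReal_ofReal (integral_nonneg (gaussianPDFReal_nonneg 0 1))]

lemma integral_Ioi_gaussianPDFReal (x : ℝ) :
    ∫ z in Ioi x, gaussianPDFReal 0 1 z = 1 - Phi x := by
  rw [Phi_eq_integral, ← integral_gaussianPDFReal_eq_one 0 one_ne_zero,
    ← intervalIntegral.integral_Iic_add_Ioi (integrable_gaussianPDFReal 0 1).integrableOn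
      (integrable_gaussianPDFReal 0 1).integrableOn]
  ring

lemma Phi_neg (x : ℝ) : Phi (-x) = 1 - Phi x :=
  calc Phi (-x) = ∫ z in Iic (-x), gaussianPDFReal 0 1 (-z) := by
        simp_rw [gaussianPDFReal_zero_neg, Phi_eq_integral]
    _ = ∫ z in Ioi x, gaussianPDFReal 0 1 z := by rw [integral_comp_neg_Iic, neg_neg]
    _ = 1 - Phi x := integral_Ioi_gaussianPDFReal x

lemma Phi_zero : Phi 0 = 1 / 2 := by
  have h := Phi_neg 0
  rw [neg_zero] at h
  linarith

end StandardGaussian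

section ClippedMean

variable {τ : ℝ}

lemma integral_clip_gaussianReal_eq_integral_add (μ : ℝ) (v : ℝ≥0) :
    ∫ y, clip τ y ∂gaussianReal μ v = ∫ z, clip τ (z + μ) ∂gaussianReal 0 v := by
  rw [← (measurableEmbedding_addRight μ).integral_map, gaussianReal_map_add_const, zero_add]

lemma integral_clip_gaussianReal_neg (μ : ℝ) (v : ℝ≥0) :
    ∫ y, clip τ y ∂gaussianReal (-μ) v = -∫ y, clip τ y ∂gaussianReal μ v := by
  rw [← gaussianReal_map_neg,
    MeasurableEmbedding.integral_map (f := fun x => -x) (MeasurableEquiv.neg ℝ).measurableEmbedding,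
    ← integral_neg]
  simp_rw [clip_neg]

lemma integrable_clip_add_const {P : Measure ℝ} [IsFiniteMeasure P] (hτ : 0 ≤ τ) (c : ℝ) :
    Integrable (fun z => clip τ (z + c)) P :=
  .of_bound ((continuous_clip hτ).comp (continuous_add_const c)).aestronglyMeasurable τ
    (ae_of_all _ fun _ => (Real.norm_eq_abs _).trans_le (abs_clip_le hτ _))

lemma integral_clip_le {P : Measure ℝ} [IsProbabilityMeasure P] (hτ : 0 ≤ τ) :
    ∫ y, clip τ y ∂P ≤ τ := by
  have hint : Integrable (clip τ) P := by simpa using integrable_clip_add_const (P := P) hτ 0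
  simpa using integral_mono hint (integrable_const τ) fun y => (abs_le.1 (abs_clip_le hτ y)).2

lemma monotone_integral_clip_gaussianReal (hτ : 0 ≤ τ) (v : ℝ≥0) :
    Monotone fun μ => ∫ y, clip τ y ∂gaussianReal μ v := fun μ ν hμν => by
  simp only [integral_clip_gaussianReal_eq_integral_add μ,
    integral_clip_gaussianReal_eq_integral_add ν]
  exact integral_mono (integrable_clip_add_const hτ μ) (integrable_clip_add_const hτ ν)
    fun z => monotone_clip hτ (by linarith)

lemma integral_gaussianPDFReal_mul_add_nonneg (v : ℝ≥0) (hτ : 0 ≤ τ) :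
    0 ≤ ∫ z in -(2 * τ)..0, gaussianPDFReal 0 v z * (z + τ) := by
  -- On `[-2τ, 0]`, `φ z - φ (-τ)` has the sign of `z + τ`, and `z + τ` itself integrates to zero.
  have hlin : ∫ z in -(2 * τ)..0, gaussianPDFReal 0 v (-τ) * (z + τ) = 0 := by
    rw [intervalIntegral.integral_const_mul,
      intervalIntegral.integral_comp_add_right (fun x => x)]
    simp only [integral_id]
    ring
  refine hlin.symm.trans_le <| intervalIntegral.integral_mono_on (by linarith)
    (Continuous.intervalIntegrable (by fun_prop) _ _)
    ((integrable_gaussianPDFReal 0 v).intervalIntegrable.mul_continuousOn (by fun_prop))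
    fun z hz => ?_
  rcases le_total (-τ) z with h | h
  · exact mul_le_mul_of_nonneg_right
      (gaussianPDFReal_zero_le_of_sq_le v (by nlinarith [hz.2])) (by linarith)
  · exact mul_le_mul_of_nonpos_right
      (gaussianPDFReal_zero_le_of_sq_le v (by nlinarith [hz.1])) (by linarith)

lemma integral_clip_gaussianReal_self (hτ : 0 ≤ τ) :
    ∫ y, clip τ y ∂gaussianReal τ 1 =
      (Phi (2 * τ) - 1 / 2) * τ + ∫ z in -(2 * τ)..0, gaussianPDFReal 0 1 z * (z + τ) := by
  set f := fun z => gaussianPDFReal 0 1 z * clip τ (z + τ)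
  have hint : Integrable f := (integrable_gaussianPDFReal 0 1).mul_bdd
    ((continuous_clip hτ).comp (continuous_add_const τ)).aestronglyMeasurable
    (ae_of_all _ fun _ => (Real.norm_eq_abs _).trans_le (abs_clip_le hτ _))
  have hsplit : ∫ z, f z = (∫ z in Iic (-(2 * τ)), f z) + (∫ z in -(2 * τ)..0, f z)
      + ∫ z in Ioi 0, f z := by
    rw [← intervalIntegral.integral_Iic_sub_Iic hint.integrableOn hint.integrableOn,
      ← intervalIntegral.integral_Iic_add_Ioi (b := 0) hint.integrableOn hint.integrableOn]
    ring
  have hleft : ∫ z in Iic (-(2 * τ)), f z = (Phi (2 * τ) - 1) * τ := by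
    rw [setIntegral_congr_fun measurableSet_Iic (g := fun z => gaussianPDFReal 0 1 z * -τ)
      fun z hz => by dsimp only [f]; rw [clip_of_le_neg hτ (by linarith [mem_Iic.1 hz])],
      integral_mul_const, ← Phi_eq_integral, Phi_neg]
    ring
  have hmid : ∫ z in -(2 * τ)..0, f z = ∫ z in -(2 * τ)..0, gaussianPDFReal 0 1 z * (z + τ) := by
    refine intervalIntegral.integral_congr fun z hz => ?_
    rw [uIcc_of_le (by linarith)] at hz
    dsimp only [f]
    rw [clip_of_mem_Icc ⟨by linarith [hz.1], by linarith [hz.2]⟩]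
  have hright : ∫ z in Ioi 0, f z = τ / 2 := by
    rw [setIntegral_congr_fun measurableSet_Ioi (g := fun z => gaussianPDFReal 0 1 z * τ)
      fun z hz => by dsimp only [f]; rw [clip_of_le hτ (by linarith [mem_Ioi.1 hz])],
      integral_mul_const, integral_Ioi_gaussianPDFReal, Phi_zero]
    ring
  rw [integral_clip_gaussianReal_eq_integral_add,
    integral_gaussianReal_eq_integral_smul one_ne_zero]
  simp only [smul_eq_mul]
  rw [hsplit, hleft, hmid, hright]
  ring

lemma integral_clip_gaussianReal_ge (hτ : 0 ≤ τ) {μ : ℝ} (hμ : τ ≤ μ) :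
    (Phi (2 * τ) - 1 / 2) * τ ≤ ∫ y, clip τ y ∂gaussianReal μ 1 := by
  calc (Phi (2 * τ) - 1 / 2) * τ ≤ ∫ y, clip τ y ∂gaussianReal τ 1 := by
        rw [integral_clip_gaussianReal_self hτ]
        linarith [integral_gaussianPDFReal_mul_add_nonneg 1 hτ]
    _ ≤ ∫ y, clip τ y ∂gaussianReal μ 1 := monotone_integral_clip_gaussianReal hτ 1 hμ

end ClippedMean

theorem stmt1 (τ μt : ℝ) (hτ : 0 < τ) (hμ : τ < |μt|) :
    |μt - ∫ y, clip τ y ∂(gaussianReal μt 1)| ≤ |μt| - (Phi (2 * τ) - 1 / 2) * τ := by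
  wlog hpos : 0 < μt generalizing μt
  · have hneg : 0 < -μt := by rcases lt_abs.1 hμ with h | h <;> linarith
    have := this (-μt) (by rwa [abs_neg]) hneg
    rwa [integral_clip_gaussianReal_neg, abs_neg, ← neg_add', abs_neg, ← sub_eq_add_neg] at this
  rw [abs_of_pos hpos] at hμ ⊢
  have hupper := integral_clip_le (P := gaussianReal μt 1) hτ.le
  have hlower := integral_clip_gaussianReal_ge hτ.le hμ.le
  rw [abs_of_nonneg (by linarith)]
  linarith
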